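/- Let S = R ∪ B be a finite bicolored point set in general position in the plane. If the boundary of the convex hull of R and the boundary of the convex hull of B intersect each other, then S contains a balanced convex 4-hole. -/

import Mathlib

noncomputable section

/-- A set of points in the plane (modeled as `ℂ`) is in general position if
no three of its (distinct) points are collinear. -/
def GenPos (S : Set ℂ) : Prop :=
  ∀ p ∈ S, ∀ q ∈ S, ∀ r ∈ S, p ≠ q → p ≠ r → q ≠ r → ¬ Collinear ℝ ({p, q, r} : Set ℂ)

/-- The boundary of a quadrilateral with vertices `a, b, c, d` in cyclic order. -/
def QuadBdry (a b c d : ℂ) : Set ℂ :=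
  segment ℝ a b ∪ segment ℝ b c ∪ segment ℝ c d ∪ segment ℝ d a

/-- The quadrilateral with vertices `a, b, c, d` in cyclic order is simple:
vertices are pairwise distinct, consecutive edges meet exactly at their common
vertex, and opposite edges are disjoint. -/
def IsSimpleQuad (a b c d : ℂ) : Prop :=
  List.Pairwise (· ≠ ·) [a, b, c, d] ∧
  segment ℝ a b ∩ segment ℝ b c = {b} ∧
  segment ℝ b c ∩ segment ℝ c d = {c} ∧
  segment ℝ c d ∩ segment ℝ d a = {d} ∧
  segment ℝ d a ∩ segment ℝ a b = {a} ∧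
  segment ℝ a b ∩ segment ℝ c d = ∅ ∧
  segment ℝ b c ∩ segment ℝ d a = ∅

/-- The interior of a simple quadrilateral: the union of the bounded connected
components of the complement of its boundary. -/
def QuadInterior (a b c d : ℂ) : Set ℂ :=
  {x | x ∉ QuadBdry a b c d ∧
    Bornology.IsBounded (connectedComponentIn (QuadBdry a b c d)ᶜ x)}

/-- The (not necessarily convex) quadrilateral with vertices `a, b, c, d`
in cyclic order is a balanced 4-hole of the bicolored set `R ∪ B`:
it is simple, its vertices belong to `R ∪ B` with exactly two of them red and
two blue, and its open interior contains no point of `R ∪ B`. -/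
def IsBalanced4Hole (R B : Finset ℂ) (a b c d : ℂ) : Prop :=
  IsSimpleQuad a b c d ∧
  ({a, b, c, d} : Set ℂ) ⊆ (↑R ∪ ↑B : Set ℂ) ∧
  (({a, b, c, d} : Set ℂ) ∩ ↑R).ncard = 2 ∧
  (({a, b, c, d} : Set ℂ) ∩ ↑B).ncard = 2 ∧
  ∀ x ∈ (↑R ∪ ↑B : Set ℂ), x ∉ QuadInterior a b c d

/-- The set of boundaries of balanced 4-holes of `R ∪ B`; two balanced 4-holes
are distinct iff they have distinct boundaries (so this set counts them). -/
def balanced4HoleBdries (R B : Finset ℂ) : Set (Set ℂ) :=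
  {Q | ∃ a b c d : ℂ, IsBalanced4Hole R B a b c d ∧ Q = QuadBdry a b c d}

/-- `p q` is an edge of the convex hull of `S`: both endpoints belong to `S`
and some nonzero linear functional is maximized on `S` exactly along it. -/
def IsHullEdge (S : Set ℂ) (p q : ℂ) : Prop :=
  p ∈ S ∧ q ∈ S ∧ p ≠ q ∧
  ∃ f : ℂ →ₗ[ℝ] ℝ, f ≠ 0 ∧ f p = f q ∧ ∀ s ∈ S, f s ≤ f p

/-- The counter-clockwise angle (in `(0, 2π]`) from the ray `p → q` to the ray
`p → x`. -/
def ccwAngle (p q x : ℂ) : ℝ :=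
  if Complex.arg ((x - p) / (q - p)) ≤ 0 then
    Complex.arg ((x - p) / (q - p)) + 2 * Real.pi
  else Complex.arg ((x - p) / (q - p))

/-- `t` is the first point of `S` reached when rotating the ray `p → q`
counter-clockwise around `p`. -/
def IsFirstCCW (S : Set ℂ) (p q t : ℂ) : Prop :=
  t ∈ S ∧ t ≠ p ∧ t ≠ q ∧
  ∀ s ∈ S, s ≠ p → s ≠ q → s ≠ t → ccwAngle p q t < ccwAngle p q s

/-- `t` is the first point of `S` reached when rotating the ray `p → q`
clockwise around `p`. -/
def IsFirstCW (S : Set ℂ) (p q t : ℂ) : Prop :=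
  t ∈ S ∧ t ≠ p ∧ t ≠ q ∧
  ∀ s ∈ S, s ≠ p → s ≠ q → s ≠ t → ccwAngle p q s < ccwAngle p q t

/-- `t ∈ T(p,q)`: `t` is one of the (at most four) first points of `S = R ∪ B`
reached by the four rotations of the rays `p → q` around `p` and `q → p`
around `q`, clockwise and counter-clockwise. -/
def InT (R B : Finset ℂ) (p q t : ℂ) : Prop :=
  IsFirstCCW (↑R ∪ ↑B : Set ℂ) p q t ∨ IsFirstCW (↑R ∪ ↑B : Set ℂ) p q t ∨
  IsFirstCCW (↑R ∪ ↑B : Set ℂ) q p t ∨ IsFirstCW (↑R ∪ ↑B : Set ℂ) q p t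

/-- The bichromatic segment `p q` (`p` red, `q` blue) is green: it is an edge
or a diagonal of some balanced 4-hole, i.e. both `p` and `q` are vertices of
some balanced 4-hole. -/
def IsGreenEdge (R B : Finset ℂ) (p q : ℂ) : Prop :=
  p ∈ R ∧ q ∈ B ∧
  ∃ a b c d : ℂ, IsBalanced4Hole R B a b c d ∧
    p ∈ ({a, b, c, d} : Set ℂ) ∧ q ∈ ({a, b, c, d} : Set ℂ)

/-- The bichromatic segment `p q` is black: it is not green and is an edge of
the convex hull of `R ∪ B`. -/
def IsBlackEdge (R B : Finset ℂ) (p q : ℂ) : Prop :=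
  p ∈ R ∧ q ∈ B ∧ ¬ IsGreenEdge R B p q ∧ IsHullEdge (↑R ∪ ↑B : Set ℂ) p q

/-- The bichromatic segment `p q` is red: it is neither green nor black and all
points of `T(p,q)` are red. -/
def IsRedEdge (R B : Finset ℂ) (p q : ℂ) : Prop :=
  p ∈ R ∧ q ∈ B ∧ ¬ IsGreenEdge R B p q ∧ ¬ IsHullEdge (↑R ∪ ↑B : Set ℂ) p q ∧
  ∀ t : ℂ, InT R B p q t → t ∈ R

/-- The bichromatic segment `p q` is blue: it is neither green nor black and
all points of `T(p,q)` are blue. -/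
def IsBlueEdge (R B : Finset ℂ) (p q : ℂ) : Prop :=
  p ∈ R ∧ q ∈ B ∧ ¬ IsGreenEdge R B p q ∧ ¬ IsHullEdge (↑R ∪ ↑B : Set ℂ) p q ∧
  ∀ t : ℂ, InT R B p q t → t ∈ B

/-- `R` and `B` are linearly separable: some line has all of `R` strictly on
one side and all of `B` strictly on the other side. -/
def LinSep (R B : Finset ℂ) : Prop :=
  ∃ (f : ℂ →ₗ[ℝ] ℝ) (c : ℝ), (∀ x ∈ R, f x < c) ∧ (∀ x ∈ B, c < f x)

/-- A finite point set is in (strictly) convex position. -/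
def ConvexPos (P : Set ℂ) : Prop :=
  ∀ x ∈ P, x ∉ convexHull ℝ (P \ {x})

/-- `{a, b, c, d}` is the vertex set of a balanced convex 4-hole of `R ∪ B`:
four pairwise distinct points in convex position, all in `R ∪ B`, exactly two
red and two blue, whose open interior (the interior of their convex hull)
contains no point of `R ∪ B`. -/
def IsBalancedConvex4Hole (R B : Finset ℂ) (a b c d : ℂ) : Prop :=
  List.Pairwise (· ≠ ·) [a, b, c, d] ∧
  ConvexPos ({a, b, c, d} : Set ℂ) ∧
  ({a, b, c, d} : Set ℂ) ⊆ (↑R ∪ ↑B : Set ℂ) ∧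
  (({a, b, c, d} : Set ℂ) ∩ ↑R).ncard = 2 ∧
  (({a, b, c, d} : Set ℂ) ∩ ↑B).ncard = 2 ∧
  ∀ x ∈ (↑R ∪ ↑B : Set ℂ), x ∉ interior (convexHull ℝ ({a, b, c, d} : Set ℂ))

/-- The open wedge `W(a,b,c)`: the open convex region bounded by the rays
`a → b` and `a → c`. -/
def wedge (a b c : ℂ) : Set ℂ :=
  {x | ∃ s t : ℝ, 0 < s ∧ 0 < t ∧ x = a + s • (b - a) + t • (c - a)}

/-- The open triangle `Δ a b c`. -/
def openTriangle (a b c : ℂ) : Set ℂ :=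
  interior (convexHull ℝ ({a, b, c} : Set ℂ))

/-- The edge `u v` of `CH(R)` and the edge `w z` of `CH(B)` see each other:
the union of their vertex sets is the vertex set of a balanced convex 4-hole
whose interior intersects neither `CH(R)` nor `CH(B)`. -/
def SeeEachOther (R B : Finset ℂ) (u v w z : ℂ) : Prop :=
  IsHullEdge (↑R : Set ℂ) u v ∧ IsHullEdge (↑B : Set ℂ) w z ∧
  IsBalancedConvex4Hole R B u v w z ∧
  interior (convexHull ℝ ({u, v, w, z} : Set ℂ)) ∩ convexHull ℝ (↑R : Set ℂ) = ∅ ∧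
  interior (convexHull ℝ ({u, v, w, z} : Set ℂ)) ∩ convexHull ℝ (↑B : Set ℂ) = ∅

/-- Condition C1: some edge of `CH(R)` and some edge of `CH(B)` see each
other. -/
def CondC1 (R B : Finset ℂ) : Prop :=
  ∃ u v w z : ℂ, SeeEachOther R B u v w z

/-- Condition C2: there exist an edge `u v` of `CH(R)` and points `b, z ∈ B`
with `z` in the open triangle `Δ u v b`, no red point in `Δ u v b`, and some
red point in the wedge `W(b,u,v)`; or the same with `R` and `B` swapped. -/
def CondC2 (R B : Finset ℂ) : Prop :=
  (∃ u v : ℂ, IsHullEdge (↑R : Set ℂ) u v ∧ ∃ b ∈ B, ∃ z ∈ B,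
      z ∈ openTriangle u v b ∧ (∀ x ∈ R, x ∉ openTriangle u v b) ∧
      ∃ x ∈ R, (x : ℂ) ∈ wedge b u v) ∨
  (∃ u v : ℂ, IsHullEdge (↑B : Set ℂ) u v ∧ ∃ r ∈ R, ∃ z ∈ R,
      z ∈ openTriangle u v r ∧ (∀ x ∈ B, x ∉ openTriangle u v r) ∧
      ∃ x ∈ B, (x : ℂ) ∈ wedge r u v)

/-- The boundary of the closed polygon with vertices `v 0, …, v (m-1)` in
cyclic order. -/
def PolyBdry (m : ℕ) (v : ℕ → ℂ) : Set ℂ :=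
  ⋃ i ∈ Finset.range m, segment ℝ (v i) (v ((i + 1) % m))

/-- The polygon with vertices `v 0, …, v (m-1)` in cyclic order is simple:
the vertices are distinct, consecutive edges meet exactly at their common
vertex, and non-consecutive edges are disjoint. -/
def IsSimplePoly (m : ℕ) (v : ℕ → ℂ) : Prop :=
  Set.InjOn v {i | i < m} ∧
  ∀ i < m, ∀ j < m, i ≠ j →
    (j = (i + 1) % m →
      segment ℝ (v i) (v ((i + 1) % m)) ∩ segment ℝ (v j) (v ((j + 1) % m)) = {v j}) ∧
    (j ≠ (i + 1) % m → i ≠ (j + 1) % m →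
      segment ℝ (v i) (v ((i + 1) % m)) ∩ segment ℝ (v j) (v ((j + 1) % m)) = ∅)

/-- The interior of a simple polygon: the union of the bounded connected
components of the complement of its boundary. -/
def PolyInterior (m : ℕ) (v : ℕ → ℂ) : Set ℂ :=
  {x | x ∉ PolyBdry m v ∧
    Bornology.IsBounded (connectedComponentIn (PolyBdry m v)ᶜ x)}

/-!
A common point `x` of the two hull boundaries lies, by general position, strictly inside a
segment `r₁r₂` between red points and strictly inside a segment `b₁b₂` between blue points, so
these two segments cross and `r₁, b₁, r₂, b₂` is a convex quadrilateral with two red and two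
blue vertices. If some point `p` of `S` lies inside it, say `p` red, then `p` and the endpoint
of `r₁r₂` on the other side of the line `b₁b₂` span a red segment that still crosses `b₁b₂`;
the new quadrilateral lies in the old one and has `p` as a vertex, so it contains fewer points
of `S`. Descending on that number ends at an empty crossing quadrilateral.
-/

open Set

lemma mul_neg_of_combo_eq_zero {X Y s t : ℝ} (hX : X ≠ 0) (hY : Y ≠ 0) (hs : 0 ≤ s)
    (ht : 0 ≤ t) (hst : s + t = 1) (h : s * X + t * Y = 0) : X * Y < 0 := by
  by_contra! hXY
  have hsX : s * (X * X) = -(t * (X * Y)) := by linear_combination X * h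
  have hs0 : s = 0 := by nlinarith [mul_self_pos.2 hX, mul_nonneg ht hXY]
  obtain rfl : t = 1 := by linarith
  exact hY (by simpa [hs0] using h)

lemma exists_combo_eq_zero {X Y : ℝ} (h : X * Y < 0) :
    ∃ s t : ℝ, 0 < s ∧ 0 < t ∧ s + t = 1 ∧ s * X + t * Y = 0 := by
  have hXY : 0 < (X - Y) * (X - Y) := by nlinarith [sq_nonneg (X + Y)]
  have hne : X - Y ≠ 0 := fun h0 => by simp [h0] at hXY
  refine ⟨-Y * (X - Y) / ((X - Y) * (X - Y)), X * (X - Y) / ((X - Y) * (X - Y)),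
    div_pos (by nlinarith) hXY, div_pos (by nlinarith) hXY, ?_, ?_⟩ <;>
    field_simp <;> ring

lemma mem_Icc_of_combo_eq_zero {X Y u : ℝ} (h : X * Y < 0) (hu : (1 - u) * X + u * Y = 0) :
    u ∈ Icc (0 : ℝ) 1 := by
  constructor
  · by_contra! hu0
    have key : (1 - u) * (X * X) + u * (X * Y) = 0 := by linear_combination X * hu
    nlinarith [mul_pos_of_neg_of_neg hu0 h, mul_self_nonneg X]
  · by_contra! hu1
    have key : (1 - u) * (X * Y) + u * (Y * Y) = 0 := by linear_combination Y * hu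
    nlinarith [mul_pos_of_neg_of_neg (sub_neg.2 hu1) h, mul_self_nonneg Y]

/-- Twice the signed area of the triangle `a b c`: positive iff `a, b, c` turn counterclockwise,
zero iff they are collinear. -/
def orient (a b c : ℂ) : ℝ :=
  (b.re - a.re) * (c.im - a.im) - (b.im - a.im) * (c.re - a.re)

section Orient

variable {a b c p x y z : ℂ}

@[simp] lemma orient_self (a c : ℂ) : orient a a c = 0 := by unfold orient; ring

@[simp] lemma orient_self_left (a b : ℂ) : orient a b a = 0 := by unfold orient; ring

@[simp] lemma orient_self_right (a b : ℂ) : orient a b b = 0 := by unfold orient; ring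

lemma orient_swap (a b c : ℂ) : orient b a c = -orient a b c := by unfold orient; ring

lemma orient_combo {s t : ℝ} (hst : s + t = 1) (u v : ℂ) :
    orient a b (s • u + t • v) = s * orient a b u + t * orient a b v := by
  obtain rfl : s = 1 - t := by linarith
  simp only [orient, Complex.add_re, Complex.add_im, Complex.real_smul, Complex.mul_re,
    Complex.mul_im, Complex.ofReal_re, Complex.ofReal_im]
  ring

lemma ne_of_orient_ne_zero (h : orient a b c ≠ 0) : a ≠ b ∧ a ≠ c ∧ b ≠ c := by
  refine ⟨?_, ?_, ?_⟩ <;> rintro rfl <;> simp at h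

lemma orient_eq_zero_of_mem_segment (h : z ∈ segment ℝ a b) : orient a b z = 0 := by
  obtain ⟨s, t, -, -, hst, rfl⟩ := h
  rw [orient_combo hst, orient_self_left, orient_self_right, mul_zero, mul_zero, add_zero]

lemma exists_eq_lineMap_of_orient_eq_zero (hab : a ≠ b) (h : orient a b c = 0) :
    ∃ t : ℝ, c = AffineMap.lineMap a b t := by
  have hba : b - a ≠ 0 := sub_ne_zero.2 hab.symm
  set w := (c - a) / (b - a)
  have hw : w.im = 0 := by
    have : (c - a).im * (b - a).re - (c - a).re * (b - a).im = orient a b c := by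
      simp only [orient, Complex.sub_re, Complex.sub_im]; ring
    rw [Complex.div_im, div_sub_div_same, this, h, zero_div]
  refine ⟨w.re, ?_⟩
  have hc : c - a = w * (b - a) := (div_mul_cancel₀ _ hba).symm
  rw [← Complex.re_add_im w, hw, Complex.ofReal_zero, zero_mul, add_zero] at hc
  rw [AffineMap.lineMap_apply_module, Complex.real_smul, Complex.real_smul]
  push_cast
  linear_combination hc

lemma collinear_of_orient_eq_zero (hab : a ≠ b) (h : orient a b c = 0) :
    Collinear ℝ ({a, b, c} : Set ℂ) := by
  obtain ⟨t, rfl⟩ := exists_eq_lineMap_of_orient_eq_zero hab h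
  rw [pair_comm, insert_comm]
  exact collinear_insert_of_mem_affineSpan_pair (AffineMap.lineMap_mem_affineSpan_pair _ _ _)

lemma GenPos.orient_ne_zero {S : Set ℂ} (hS : GenPos S) (ha : a ∈ S) (hb : b ∈ S) (hc : c ∈ S)
    (hab : a ≠ b) (hac : a ≠ c) (hbc : b ≠ c) : orient a b c ≠ 0 :=
  fun h => hS a ha b hb c hc hab hac hbc (collinear_of_orient_eq_zero hab h)

lemma GenPos.notMem_openSegment {S : Set ℂ} (hS : GenPos S) (ha : a ∈ S) (hb : b ∈ S)
    (hp : p ∈ S) (hab : a ≠ b) : p ∉ openSegment ℝ a b := by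
  intro hmem
  have hap : a ≠ p := by rintro rfl; exact hab (left_mem_openSegment_iff.1 hmem)
  have hbp : b ≠ p := by rintro rfl; exact hab (right_mem_openSegment_iff.1 hmem)
  exact hS.orient_ne_zero ha hb hp hab hap hbp
    (orient_eq_zero_of_mem_segment (openSegment_subset_segment _ _ _ hmem))

lemma exists_mem_openSegment_orient_eq_zero (h : orient a b x * orient a b y < 0) :
    ∃ z ∈ openSegment ℝ x y, orient a b z = 0 := by
  obtain ⟨s, t, hs, ht, hst, h0⟩ := exists_combo_eq_zero h
  exact ⟨s • x + t • y, ⟨s, t, hs, ht, hst, rfl⟩, by rw [orient_combo hst, h0]⟩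

lemma mul_orient_neg_of_mem_segment (hz : z ∈ segment ℝ x y) (hz0 : orient a b z = 0)
    (hx : orient a b x ≠ 0) (hy : orient a b y ≠ 0) : orient a b x * orient a b y < 0 := by
  obtain ⟨s, t, hs, ht, hst, rfl⟩ := hz
  exact mul_neg_of_combo_eq_zero hx hy hs ht hst (by rwa [orient_combo hst] at hz0)

lemma convex_setOf_mul_orient_le (a b : ℂ) (c k : ℝ) : Convex ℝ {y | c * orient a b y ≤ k} := by
  intro x hx y hy s t hs ht hst
  simp only [mem_ofPred_eq, orient_combo hst] at hx hy ⊢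
  have hk : s * k + t * k = k := by rw [← add_mul, hst, one_mul]
  nlinarith [mul_le_mul_of_nonneg_left hx hs, mul_le_mul_of_nonneg_left hy ht]

/-- A nonconstant affine function has no local maximum. -/
lemma notMem_interior_of_forall_mul_orient_le {K : Set ℂ} {c : ℝ} (hab : a ≠ b) (hc : c ≠ 0)
    (h : ∀ y ∈ K, c * orient a b y ≤ c * orient a b x) : x ∉ interior K := by
  intro hx
  let L : ℂ →L[ℝ] ℝ := (c * (b - a).re) • Complex.imCLM - (c * (b - a).im) • Complex.reCLM
  have hL : ∀ y, c * orient a b y = L y - L a := fun y => by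
    simp only [L, orient, sub_apply, smul_apply,
      Complex.imCLM_apply, Complex.reCLM_apply, smul_eq_mul, Complex.sub_re, Complex.sub_im]
    ring
  have hmax : IsLocalMax L x :=
    IsMaxOn.isLocalMax (fun y hy => by simpa [hL] using h y hy) (mem_interior_iff_mem_nhds.1 hx)
  have hL0 := hmax.hasFDerivAt_eq_zero L.hasFDerivAt
  have h1 := congrArg (· 1) hL0
  have hI := congrArg (· Complex.I) hL0
  simp only [L, sub_apply, smul_apply,
    Complex.imCLM_apply, Complex.reCLM_apply, smul_eq_mul, zero_apply,
    Complex.one_re, Complex.one_im, Complex.I_re, Complex.I_im] at h1 hI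
  apply hab
  have hre : (b - a).re = 0 := by simpa [hc] using hI
  have him : (b - a).im = 0 := by simpa [hc] using h1
  exact (sub_eq_zero.1 (Complex.ext hre him)).symm

end Orient

lemma ncard_inter_interior_lt {E : Type*} [TopologicalSpace E] {S K K' : Set E} {p : E}
    (hS : S.Finite) (hK : K' ⊆ K) (hp : p ∈ S) (hpK : p ∈ interior K) (hpK' : p ∉ interior K') :
    (S ∩ interior K').ncard < (S ∩ interior K).ncard :=
  ncard_lt_ncard ((ssubset_iff_of_subset (inter_subset_inter_right _ (interior_mono hK))).2
    ⟨p, ⟨hp, hpK⟩, fun h => hpK' h.2⟩) (hS.inter_of_left _)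

def SegmentsCross (a₁ a₂ c₁ c₂ : ℂ) : Prop :=
  orient a₁ a₂ c₁ * orient a₁ a₂ c₂ < 0 ∧ orient c₁ c₂ a₁ * orient c₁ c₂ a₂ < 0

namespace SegmentsCross

variable {a₁ a₂ c₁ c₂ a p y : ℂ}

lemma symm (h : SegmentsCross a₁ a₂ c₁ c₂) : SegmentsCross c₁ c₂ a₁ a₂ := And.symm h

lemma swap_left (h : SegmentsCross a₁ a₂ c₁ c₂) : SegmentsCross a₂ a₁ c₁ c₂ := by
  refine ⟨?_, ?_⟩
  · simpa only [orient_swap a₁ a₂, neg_mul_neg] using h.1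
  · simpa only [mul_comm] using h.2

lemma quad_comm (a₁ a₂ c₁ c₂ : ℂ) : ({c₁, a₁, c₂, a₂} : Set ℂ) = {a₁, c₁, a₂, c₂} := by
  ext; simp only [mem_insert_iff, mem_singleton_iff]; tauto

lemma ne (h : SegmentsCross a₁ a₂ c₁ c₂) :
    a₁ ≠ c₁ ∧ a₁ ≠ a₂ ∧ a₁ ≠ c₂ ∧ c₁ ≠ a₂ ∧ c₁ ≠ c₂ ∧ a₂ ≠ c₂ := by
  obtain ⟨h₁, h₂⟩ := mul_ne_zero_iff.1 h.1.ne
  obtain ⟨h₃, -⟩ := mul_ne_zero_iff.1 h.2.ne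
  obtain ⟨-, ha₁c₁, ha₂c₁⟩ := ne_of_orient_ne_zero h₁
  obtain ⟨ha₁a₂, ha₁c₂, ha₂c₂⟩ := ne_of_orient_ne_zero h₂
  exact ⟨ha₁c₁, ha₁a₂, ha₁c₂, ha₂c₁.symm, (ne_of_orient_ne_zero h₃).1, ha₂c₂⟩

lemma notMem_convexHull (h : SegmentsCross a₁ a₂ c₁ c₂) : a₁ ∉ convexHull ℝ {c₁, a₂, c₂} := by
  intro ha₁
  set f := orient c₁ c₂ a₁
  have hsub : convexHull ℝ {c₁, a₂, c₂} ⊆ {y | f * orient c₁ c₂ y ≤ 0} := by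
    refine convexHull_min ?_ (convex_setOf_mul_orient_le _ _ _ _)
    simp only [insert_subset_iff, singleton_subset_iff, mem_ofPred_eq, orient_self_left,
      orient_self_right, mul_zero, le_refl, true_and, and_true]
    exact h.2.le
  have hf : f ≠ 0 := (mul_ne_zero_iff.1 h.2.ne).1
  exact (mul_self_pos.2 hf).not_ge (hsub ha₁)

lemma notMem_interior (h : SegmentsCross a₁ a₂ c₁ c₂) :
    a₁ ∉ interior (convexHull ℝ {a₁, c₁, a₂, c₂}) := by
  set f := orient c₁ c₂ a₁
  have hf : f ≠ 0 := (mul_ne_zero_iff.1 h.2.ne).1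
  refine notMem_interior_of_forall_mul_orient_le (ne_of_orient_ne_zero hf).1 hf fun y hy => ?_
  refine convexHull_min ?_ (convex_setOf_mul_orient_le _ _ _ _) hy
  simp only [insert_subset_iff, singleton_subset_iff, mem_ofPred_eq, orient_self_left,
    orient_self_right, mul_zero]
  exact ⟨le_rfl, mul_self_nonneg f, h.2.le.trans (mul_self_nonneg f), mul_self_nonneg f⟩

lemma vertex_notMem_interior (h : SegmentsCross a₁ a₂ c₁ c₂) :
    ∀ v ∈ ({a₁, c₁, a₂, c₂} : Set ℂ), v ∉ interior (convexHull ℝ {a₁, c₁, a₂, c₂}) := by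
  rintro v (rfl | rfl | rfl | rfl)
  · exact h.notMem_interior
  · simpa only [quad_comm] using h.symm.notMem_interior
  · convert h.swap_left.notMem_interior using 3
    congr 1; ext; simp only [mem_insert_iff, mem_singleton_iff]; tauto
  · convert h.symm.swap_left.notMem_interior using 3
    congr 1; ext; simp only [mem_insert_iff, mem_singleton_iff]; tauto

lemma convexPos (h : SegmentsCross a₁ a₂ c₁ c₂) : ConvexPos {a₁, c₁, a₂, c₂} := by
  have key : ∀ {v : ℂ} {T : Set ℂ}, v ∉ convexHull ℝ T → ({a₁, c₁, a₂, c₂} \ {v} : Set ℂ) ⊆ T →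
      v ∉ convexHull ℝ ({a₁, c₁, a₂, c₂} \ {v}) :=
    fun hv hsub hmem => hv (convexHull_mono hsub hmem)
  rintro v (rfl | rfl | rfl | rfl)
  · exact key h.notMem_convexHull (by intro z; simp; tauto)
  · exact key h.symm.notMem_convexHull (by intro z; simp; tauto)
  · exact key h.swap_left.notMem_convexHull (by intro z; simp; tauto)
  · exact key h.symm.swap_left.notMem_convexHull (by intro z; simp; tauto)

lemma mem_segment_of_mem_segment (h : SegmentsCross a₁ a₂ c₁ c₂) (hy : y ∈ segment ℝ a₁ a₂)
    (hy₀ : orient c₁ c₂ y = 0) : y ∈ segment ℝ c₁ c₂ := by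
  obtain ⟨u, rfl⟩ := exists_eq_lineMap_of_orient_eq_zero (ne_of_orient_ne_zero
    (mul_ne_zero_iff.1 h.2.ne).1).1 hy₀
  have hu : (1 - u) * orient a₁ a₂ c₁ + u * orient a₁ a₂ c₂ = 0 := by
    rw [← orient_combo (sub_add_cancel 1 u), ← AffineMap.lineMap_apply_module]
    exact orient_eq_zero_of_mem_segment hy
  rw [segment_eq_image_lineMap]
  exact mem_image_of_mem _ (mem_Icc_of_combo_eq_zero h.1 hu)

lemma mem_segment_of_mem_convexHull (h : SegmentsCross a₁ a₂ c₁ c₂)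
    (hy : y ∈ convexHull ℝ {a₁, c₁, a₂, c₂}) (hy₀ : orient c₁ c₂ y = 0) :
    y ∈ segment ℝ c₁ c₂ := by
  have hV : ({a₁, c₁, a₂, c₂} : Set ℂ) = {a₁, a₂} ∪ {c₁, c₂} := by
    ext; simp only [mem_insert_iff, mem_singleton_iff, mem_union]; tauto
  rw [hV, convexHull_union (insert_nonempty _ _) (insert_nonempty _ _), convexHull_pair,
    convexHull_pair, mem_convexJoin] at hy
  obtain ⟨m, hm, n, hn, s, t, hs, ht, hst, rfl⟩ := hy
  rw [orient_combo hst, orient_eq_zero_of_mem_segment hn, mul_zero, add_zero] at hy₀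
  rcases mul_eq_zero.1 hy₀ with rfl | hm₀
  · rw [zero_add] at hst
    rwa [hst, zero_smul, one_smul, zero_add]
  · exact convex_segment c₁ c₂ (h.mem_segment_of_mem_segment hm hm₀) hn hs ht hst

lemma exchange (h : SegmentsCross a₁ a₂ c₁ c₂) (hp : p ∈ convexHull ℝ {a₁, c₁, a₂, c₂})
    (ha : a ∈ ({a₁, a₂} : Set ℂ)) (hpa : orient c₁ c₂ p * orient c₁ c₂ a < 0)
    (h₁ : orient p a c₁ ≠ 0) (h₂ : orient p a c₂ ≠ 0) : SegmentsCross p a c₁ c₂ := by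
  refine ⟨?_, hpa⟩
  obtain ⟨y, hy, hy₀⟩ := exists_mem_openSegment_orient_eq_zero hpa
  have haV : a ∈ convexHull ℝ {a₁, c₁, a₂, c₂} :=
    subset_convexHull ℝ _ (by rcases ha with rfl | rfl <;> simp)
  have hyV := (convex_convexHull ℝ _).openSegment_subset hp haV hy
  exact mul_orient_neg_of_mem_segment (h.mem_segment_of_mem_convexHull hyV hy₀)
    (orient_eq_zero_of_mem_segment (openSegment_subset_segment _ _ _ hy)) h₁ h₂

lemma exists_exchange {S : Set ℂ} (hgp : GenPos S) (h : SegmentsCross a₁ a₂ c₁ c₂)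
    (ha₁ : a₁ ∈ S) (ha₂ : a₂ ∈ S) (hc₁ : c₁ ∈ S) (hc₂ : c₂ ∈ S) (hp : p ∈ S)
    (hpint : p ∈ interior (convexHull ℝ {a₁, c₁, a₂, c₂})) :
    ∃ a ∈ ({a₁, a₂} : Set ℂ), SegmentsCross p a c₁ c₂ := by
  have hpV : p ∉ ({a₁, c₁, a₂, c₂} : Set ℂ) := fun hv => h.vertex_notMem_interior p hv hpint
  simp only [mem_insert_iff, mem_singleton_iff, not_or] at hpV
  obtain ⟨hpa₁, hpc₁, hpa₂, hpc₂⟩ := hpV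
  obtain ⟨ha₁c₁, -, ha₁c₂, hc₁a₂, hc₁c₂, ha₂c₂⟩ := h.ne
  have hside : ∀ a ∈ ({a₁, a₂} : Set ℂ), orient c₁ c₂ p * orient c₁ c₂ a < 0 →
      SegmentsCross p a c₁ c₂ := by
    rintro a ha hopp
    have haS : a ∈ S := by rcases ha with rfl | rfl <;> assumption
    have hac₁ : a ≠ c₁ := by rcases ha with rfl | rfl <;> [exact ha₁c₁; exact hc₁a₂.symm]
    have hac₂ : a ≠ c₂ := by rcases ha with rfl | rfl <;> assumption
    have hpa : p ≠ a := by rcases ha with rfl | rfl <;> assumption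
    exact h.exchange (interior_subset hpint) ha hopp
      (hgp.orient_ne_zero hp haS hc₁ hpa hpc₁ hac₁) (hgp.orient_ne_zero hp haS hc₂ hpa hpc₂ hac₂)
  have hX : orient c₁ c₂ p ≠ 0 := hgp.orient_ne_zero hc₁ hc₂ hp hc₁c₂ (Ne.symm hpc₁) (Ne.symm hpc₂)
  have hsign : orient c₁ c₂ p * orient c₁ c₂ a₁ * (orient c₁ c₂ p * orient c₁ c₂ a₂) < 0 := by
    rw [mul_mul_mul_comm]
    exact mul_neg_of_pos_of_neg (mul_self_pos.2 hX) h.2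
  rcases mul_neg_iff.1 hsign with ⟨-, h₂⟩ | ⟨h₁, -⟩
  · exact ⟨a₂, by simp, hside a₂ (by simp) h₂⟩
  · exact ⟨a₁, by simp, hside a₁ (by simp) h₁⟩

lemma exists_exchange_ncard_lt {S : Set ℂ} (hS : S.Finite) (hgp : GenPos S)
    (h : SegmentsCross a₁ a₂ c₁ c₂) (ha₁ : a₁ ∈ S) (ha₂ : a₂ ∈ S) (hc₁ : c₁ ∈ S) (hc₂ : c₂ ∈ S)
    (hp : p ∈ S) (hpint : p ∈ interior (convexHull ℝ {a₁, c₁, a₂, c₂})) :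
    ∃ a ∈ ({a₁, a₂} : Set ℂ), SegmentsCross p a c₁ c₂ ∧
      (S ∩ interior (convexHull ℝ {p, c₁, a, c₂})).ncard <
        (S ∩ interior (convexHull ℝ {a₁, c₁, a₂, c₂})).ncard := by
  obtain ⟨a, ha, h'⟩ := h.exists_exchange hgp ha₁ ha₂ hc₁ hc₂ hp hpint
  refine ⟨a, ha, h', ncard_inter_interior_lt hS ?_ hp hpint h'.notMem_interior⟩
  refine convexHull_min ?_ (convex_convexHull ℝ _)
  have hV := subset_convexHull ℝ ({a₁, c₁, a₂, c₂} : Set ℂ)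
  simp only [insert_subset_iff, singleton_subset_iff] at hV ⊢
  exact ⟨interior_subset hpint, hV.2.1, by rcases ha with rfl | rfl <;> simp [hV], hV.2.2.2⟩

theorem exists_empty {A C : Set ℂ} (hfin : (A ∪ C).Finite) (hgp : GenPos (A ∪ C))
    (h : SegmentsCross a₁ a₂ c₁ c₂) (ha₁ : a₁ ∈ A) (ha₂ : a₂ ∈ A) (hc₁ : c₁ ∈ C) (hc₂ : c₂ ∈ C) :
    ∃ a₁ a₂ c₁ c₂, a₁ ∈ A ∧ a₂ ∈ A ∧ c₁ ∈ C ∧ c₂ ∈ C ∧ SegmentsCross a₁ a₂ c₁ c₂ ∧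
      ∀ x ∈ A ∪ C, x ∉ interior (convexHull ℝ {a₁, c₁, a₂, c₂}) := by
  induction hn : ((A ∪ C) ∩ interior (convexHull ℝ {a₁, c₁, a₂, c₂})).ncard
    using Nat.strong_induction_on generalizing a₁ a₂ c₁ c₂ with
  | _ n ih =>
  by_cases hempty : ∀ x ∈ A ∪ C, x ∉ interior (convexHull ℝ {a₁, c₁, a₂, c₂})
  · exact ⟨a₁, a₂, c₁, c₂, ha₁, ha₂, hc₁, hc₂, h, hempty⟩
  push Not at hempty
  obtain ⟨p, hp, hpint⟩ := hempty
  rcases hp with hpA | hpC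
  · obtain ⟨a, ha, h', hlt⟩ := h.exists_exchange_ncard_lt hfin hgp (.inl ha₁) (.inl ha₂)
      (.inr hc₁) (.inr hc₂) (.inl hpA) hpint
    exact ih _ (hn ▸ hlt) h' hpA (by rcases ha with rfl | rfl <;> assumption) hc₁ hc₂ rfl
  · rw [← quad_comm] at hpint
    obtain ⟨c, hc, h', hlt⟩ := h.symm.exists_exchange_ncard_lt hfin hgp (.inr hc₁) (.inr hc₂)
      (.inl ha₁) (.inl ha₂) (.inr hpC) hpint
    rw [quad_comm a₁ a₂ p c, quad_comm a₁ a₂ c₁ c₂] at hlt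
    exact ih _ (hn ▸ hlt) h'.symm ha₁ ha₂ hpC (by rcases hc with rfl | rfl <;> assumption) rfl

end SegmentsCross

lemma SegmentsCross.isBalancedConvex4Hole {R B : Finset ℂ} {r₁ r₂ b₁ b₂ : ℂ}
    (hRB : Disjoint R B) (h : SegmentsCross r₁ r₂ b₁ b₂) (hr₁ : r₁ ∈ R) (hr₂ : r₂ ∈ R)
    (hb₁ : b₁ ∈ B) (hb₂ : b₂ ∈ B)
    (hempty : ∀ x ∈ (↑R ∪ ↑B : Set ℂ), x ∉ interior (convexHull ℝ {r₁, b₁, r₂, b₂})) :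
    IsBalancedConvex4Hole R B r₁ b₁ r₂ b₂ := by
  obtain ⟨hr₁b₁, hr₁r₂, hr₁b₂, hb₁r₂, hb₁b₂, hr₂b₂⟩ := h.ne
  have hb₁R : b₁ ∉ R := Finset.disjoint_right.1 hRB hb₁
  have hb₂R : b₂ ∉ R := Finset.disjoint_right.1 hRB hb₂
  have hr₁B : r₁ ∉ B := Finset.disjoint_left.1 hRB hr₁
  have hr₂B : r₂ ∉ B := Finset.disjoint_left.1 hRB hr₂
  have hred : ({r₁, b₁, r₂, b₂} : Set ℂ) ∩ ↑R = {r₁, r₂} := by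
    ext x; simp only [mem_inter_iff, mem_insert_iff, mem_singleton_iff, Finset.mem_coe]
    constructor
    · rintro ⟨rfl | rfl | rfl | rfl, hx⟩ <;> simp_all
    · rintro (rfl | rfl) <;> simp [hr₁, hr₂]
  have hblue : ({r₁, b₁, r₂, b₂} : Set ℂ) ∩ ↑B = {b₁, b₂} := by
    ext x; simp only [mem_inter_iff, mem_insert_iff, mem_singleton_iff, Finset.mem_coe]
    constructor
    · rintro ⟨rfl | rfl | rfl | rfl, hx⟩ <;> simp_all
    · rintro (rfl | rfl) <;> simp [hb₁, hb₂]
  refine ⟨by simp [*], h.convexPos, ?_, by rw [hred, ncard_pair hr₁r₂],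
    by rw [hblue, ncard_pair hb₁b₂], hempty⟩
  simp [insert_subset_iff, hr₁, hr₂, hb₁, hb₂]

/-- Take a Carathéodory representation with positive weights: with three affinely independent
points it would put `x` inside a triangle. -/
theorem mem_or_mem_openSegment_of_notMem_interior_convexHull {E : Type*}
    [NormedAddCommGroup E] [NormedSpace ℝ E] (hE : Module.finrank ℝ E = 2) {s : Set E} {x : E}
    (hx : x ∈ convexHull ℝ s) (hint : x ∉ interior (convexHull ℝ s)) :
    x ∈ s ∨ ∃ a ∈ s, ∃ b ∈ s, a ≠ b ∧ x ∈ openSegment ℝ a b := by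
  classical
  have : FiniteDimensional ℝ E := Module.finite_of_finrank_eq_succ hE
  obtain ⟨ι, _, z, w, hzs, hind, hw₀, hw₁, rfl⟩ := eq_pos_convex_span_of_mem_convexHull hx
  have hcard : Fintype.card ι ≤ 3 := by
    have := (Submodule.finrank_le (vectorSpan ℝ (range z))).trans_eq hE
    have := hind.card_le_finrank_succ
    omega
  interval_cases hι : Fintype.card ι
  · simp [Fintype.card_eq_zero_iff.1 hι] at hw₁
  · obtain ⟨i, hi⟩ := Fintype.card_eq_one_iff.1 hι
    have huniv : (Finset.univ : Finset ι) = {i} := Finset.eq_singleton_iff_unique_mem.2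
      ⟨Finset.mem_univ i, fun j _ => hi j⟩
    rw [huniv, Finset.sum_singleton] at hw₁ ⊢
    left; simpa [hw₁] using hzs (mem_range_self i)
  · obtain ⟨i, j, hij, huniv⟩ := Finset.card_eq_two.1 hι
    rw [huniv, Finset.sum_pair hij] at hw₁ ⊢
    exact .inr ⟨z i, hzs (mem_range_self i), z j, hzs (mem_range_self j),
      hind.injective.ne hij, w i, w j, hw₀ i, hw₀ j, hw₁, rfl⟩
  · refine absurd (interior_mono (convexHull_mono hzs) ?_) hint
    let b : AffineBasis ι ℝ E :=
      ⟨z, hind, hind.affineSpan_eq_top_iff_card_eq_finrank_add_one.2 (by rw [hι, hE])⟩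
    change ∑ i, w i • z i ∈ interior (convexHull ℝ (range b))
    rw [b.interior_convexHull]
    intro i
    rw [← Finset.univ.affineCombination_eq_linear_combination _ _ hw₁]
    exact (b.coord_apply_combination_of_mem (Finset.mem_univ i) hw₁).symm ▸ hw₀ i

lemma GenPos.segmentsCross_of_mem_openSegment {A C : Set ℂ} {a₁ a₂ c₁ c₂ x : ℂ}
    (hAC : Disjoint A C) (hgp : GenPos (A ∪ C)) (ha₁ : a₁ ∈ A) (ha₂ : a₂ ∈ A) (hc₁ : c₁ ∈ C)
    (hc₂ : c₂ ∈ C) (ha : a₁ ≠ a₂) (hc : c₁ ≠ c₂) (hxa : x ∈ openSegment ℝ a₁ a₂)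
    (hxc : x ∈ openSegment ℝ c₁ c₂) : SegmentsCross a₁ a₂ c₁ c₂ := by
  have hne : ∀ {a c}, a ∈ A → c ∈ C → a ≠ c := fun ha hc hac => hAC.ne_of_mem ha hc hac
  have hx₀ : ∀ {p q}, x ∈ openSegment ℝ p q → orient p q x = 0 :=
    fun h => orient_eq_zero_of_mem_segment (openSegment_subset_segment _ _ _ h)
  constructor
  · exact mul_orient_neg_of_mem_segment (openSegment_subset_segment _ _ _ hxc) (hx₀ hxa)
      (hgp.orient_ne_zero (.inl ha₁) (.inl ha₂) (.inr hc₁) ha (hne ha₁ hc₁) (hne ha₂ hc₁))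
      (hgp.orient_ne_zero (.inl ha₁) (.inl ha₂) (.inr hc₂) ha (hne ha₁ hc₂) (hne ha₂ hc₂))
  · exact mul_orient_neg_of_mem_segment (openSegment_subset_segment _ _ _ hxa) (hx₀ hxc)
      (hgp.orient_ne_zero (.inr hc₁) (.inr hc₂) (.inl ha₁) hc (hne ha₁ hc₁).symm
        (hne ha₁ hc₂).symm)
      (hgp.orient_ne_zero (.inr hc₁) (.inr hc₂) (.inl ha₂) hc (hne ha₂ hc₁).symm
        (hne ha₂ hc₂).symm)

lemma mem_or_mem_openSegment_of_mem_frontier_convexHull {A : Finset ℂ} {x : ℂ}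
    (hx : x ∈ frontier (convexHull ℝ (↑A : Set ℂ))) :
    x ∈ A ∨ ∃ a ∈ A, ∃ b ∈ A, a ≠ b ∧ x ∈ openSegment ℝ a b := by
  have hclosed := (A.finite_toSet.isCompact_convexHull (𝕜 := ℝ)).isClosed
  exact mem_or_mem_openSegment_of_notMem_interior_convexHull Complex.finrank_real_complex
    (hclosed.frontier_subset hx) hx.2

/-- If the boundaries of `CH(R)` and `CH(B)` intersect, then
`S = R ∪ B` contains a balanced convex 4-hole. -/
theorem stmt8 (R B : Finset ℂ) (hdisj : Disjoint R B)
    (hgp : GenPos (↑R ∪ ↑B : Set ℂ))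
    (hcross : (frontier (convexHull ℝ (↑R : Set ℂ)) ∩
      frontier (convexHull ℝ (↑B : Set ℂ))).Nonempty) :
    ∃ p q s t : ℂ, IsBalancedConvex4Hole R B p q s t := by
  obtain ⟨x, hxR, hxB⟩ := hcross
  have hRB : Disjoint (R : Set ℂ) B := Finset.disjoint_coe.2 hdisj
  rcases mem_or_mem_openSegment_of_mem_frontier_convexHull hxR with
    hxR | ⟨r₁, hr₁, r₂, hr₂, hr, hxr⟩ <;>
  rcases mem_or_mem_openSegment_of_mem_frontier_convexHull hxB with
    hxB | ⟨b₁, hb₁, b₂, hb₂, hb, hxb⟩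
  · exact absurd hxB (Finset.disjoint_left.1 hdisj hxR)
  · exact absurd hxb (hgp.notMem_openSegment (.inr hb₁) (.inr hb₂) (.inl hxR) hb)
  · exact absurd hxr (hgp.notMem_openSegment (.inl hr₁) (.inl hr₂) (.inr hxB) hr)
  have hfin : (↑R ∪ ↑B : Set ℂ).Finite := R.finite_toSet.union B.finite_toSet
  obtain ⟨r₁, r₂, b₁, b₂, hr₁, hr₂, hb₁, hb₂, h, hempty⟩ :=
    (hgp.segmentsCross_of_mem_openSegment hRB hr₁ hr₂ hb₁ hb₂ hr hb hxr hxb).exists_empty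
      hfin hgp hr₁ hr₂ hb₁ hb₂
  exact ⟨r₁, b₁, r₂, b₂, h.isBalancedConvex4Hole hdisj hr₁ hr₂ hb₁ hb₂ hempty⟩
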